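/- For the relaxed pricing problem with ε = 0 (non-strict indicator constraints), the optimal value g(0) is finite and attained by some feasible (p, τ, y); moreover g(0) ≥ m·τ* ≥ the value of any feasible strict solution, where m·τ* = sup_{p ≥ 0} ∑_i f_i(p). -/

import Mathlib

/-- The worst-case revenue from a customer with historical prices `P` and choice
`c` under new prices `p`: zero if the no-purchase option is feasible
(`p c ≥ P c`), else the minimum price among feasible products
(`p j - p c ≤ P j - P c`, a set containing `c`). -/
noncomputable def wrevF {n : ℕ} (P p : Fin n → ℝ) (c : Fin n) : ℝ :=
  if p c < P c then
    (Finset.univ.filter fun j => p j - p c ≤ P j - P c).inf' ⟨c, by simp⟩ p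
  else 0

/-- The worst-case revenue in the attained-supremum (relaxed, `ε = 0`) sense:
the customer purchases iff `p c ≤ P c`, and in the worst case she picks the
cheapest product among her historical choice `c` and products that are strictly
incentive-compatible under the new prices (`p j - p c < P j - P c`). -/
noncomputable def grev {n : ℕ} (P p : Fin n → ℝ) (c : Fin n) : ℝ :=
  if p c ≤ P c then
    (Finset.univ.filter fun j => j = c ∨ p j - p c < P j - P c).inf' ⟨c, by simp⟩ p
  else 0

/-!
The relaxed revenue `grev` differs from `wrevF` only in that the purchase condition is closed and
the alternative products must be strictly incentive-compatible. Strict inequalities are open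
conditions and the purchase region is closed, so each `grev (P i) · (c i)` is upper semicontinuous
on the nonnegative orthant, and so is their sum. Capping all prices at a common bound `B ≥ P i j`
does not decrease `grev`, so the supremum over the orthant equals the supremum over the compact box
`[0, B]ⁿ`, where an upper semicontinuous function attains its maximum. Finally `wrevF ≤ grev`
pointwise, since `grev` minimises over fewer products.
-/

open Filter Topology

section grev

variable {n : ℕ} {P p : Fin n → ℝ} {c j : Fin n}

lemma grev_eq_zero_of_lt (h : P c < p c) : grev P p c = 0 :=
  if_neg h.not_ge

lemma grev_le_of_mem (hc : p c ≤ P c) (hj : j = c ∨ p j - p c < P j - P c) :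
    grev P p c ≤ p j := by
  rw [grev, if_pos hc]
  exact Finset.inf'_le _ (by simpa using hj)

lemma le_grev (hc : p c ≤ P c) {a : ℝ}
    (h : ∀ j, (j = c ∨ p j - p c < P j - P c) → a ≤ p j) : a ≤ grev P p c := by
  rw [grev, if_pos hc]
  exact Finset.le_inf' _ _ fun j hj => h j (by simpa using hj)

lemma exists_grev_eq (hc : p c ≤ P c) :
    ∃ j, (j = c ∨ p j - p c < P j - P c) ∧ grev P p c = p j := by
  rw [grev, if_pos hc]
  obtain ⟨j, hj, hpj⟩ := Finset.exists_mem_eq_inf' _ p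
  exact ⟨j, by simpa using hj, hpj⟩

lemma grev_nonneg (hp : 0 ≤ p) : 0 ≤ grev P p c := by
  rcases le_or_gt (p c) (P c) with hc | hc
  · exact le_grev hc fun j _ => hp j
  · exact (grev_eq_zero_of_lt hc).ge

lemma grev_le_max (hj : j = c ∨ p j - p c < P j - P c) : grev P p c ≤ max (p j) 0 := by
  rcases le_or_gt (p c) (P c) with hc | hc
  · exact (grev_le_of_mem hc hj).trans (le_max_left _ _)
  · exact (grev_eq_zero_of_lt hc).trans_le (le_max_right _ _)

lemma wrevF_le_grev (hp : 0 ≤ p) : wrevF P p c ≤ grev P p c := by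
  rw [wrevF]
  split_ifs with hc
  · obtain ⟨j, hj, hpj⟩ := exists_grev_eq hc.le
    have hfeas : p j - p c ≤ P j - P c := hj.elim (fun h => by simp [h]) le_of_lt
    rw [hpj]
    exact Finset.inf'_le _ (by simpa using hfeas)
  · exact grev_nonneg hp

lemma grev_le_grev_min {B : ℝ} (hp : 0 ≤ p) (hPB : ∀ j, P j ≤ B) (hB : 0 ≤ B) :
    grev P p c ≤ grev P (fun j => min (p j) B) c := by
  rcases le_or_gt (p c) (P c) with hc | hc
  · have hpc : min (p c) B = p c := min_eq_left (hc.trans (hPB c))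
    refine le_grev (hpc.trans_le hc) fun j hj => ?_
    rw [hpc] at hj
    rcases hj with rfl | hlt
    · rw [hpc]
      exact grev_le_of_mem hc (.inl rfl)
    · -- a strictly incentive-compatible `j` has `p j < P j ≤ B`, so its price is not capped
      have hpj : min (p j) B = p j := min_eq_left <| by
        by_contra! h
        rw [min_eq_right h.le] at hlt
        linarith [hPB j]
      rw [hpj] at hlt ⊢
      exact grev_le_of_mem hc (.inr hlt)
  · exact (grev_eq_zero_of_lt hc).trans_le (grev_nonneg fun j => le_min (hp j) hB)

lemma upperSemicontinuousAt_grev (hp : 0 ≤ p) :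
    UpperSemicontinuousAt (fun q => grev P q c) p := by
  intro y hy
  rcases le_or_gt (p c) (P c) with hc | hc
  · obtain ⟨j, hj, hpj⟩ := exists_grev_eq hc
    have hmem : ∀ᶠ q in 𝓝 p, j = c ∨ q j - q c < P j - P c := by
      rcases hj with rfl | hlt
      · exact .of_forall fun _ => .inl rfl
      · exact (((continuous_apply j).sub (continuous_apply c)).tendsto p).eventually
          (gt_mem_nhds hlt) |>.mono fun _ => .inr
    have hlt : ∀ᶠ q in 𝓝 p, max (q j) 0 < y :=
      (((continuous_apply j).max continuous_const).tendsto p).eventually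
        (gt_mem_nhds ((max_eq_left (hp j)).trans_lt (hpj ▸ hy)))
    filter_upwards [hmem, hlt] with q hq hqy using (grev_le_max hq).trans_lt hqy
  · filter_upwards [((continuous_apply c).tendsto p).eventually (lt_mem_nhds hc)] with q hq
    rwa [grev_eq_zero_of_lt hq, ← grev_eq_zero_of_lt hc]

end grev

theorem stmt_18_general (m n : ℕ) (P : Fin m → Fin n → ℝ) (c : Fin m → Fin n) :
    ∃ p0 : Fin n → ℝ, (∀ j, 0 ≤ p0 j) ∧
      (∀ p : Fin n → ℝ, (∀ j, 0 ≤ p j) →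
        ∑ i, grev (P i) p (c i) ≤ ∑ i, grev (P i) p0 (c i)) ∧
      (∀ p : Fin n → ℝ, (∀ j, 0 ≤ p j) →
        ∑ i, wrevF (P i) p (c i) ≤ ∑ i, grev (P i) p0 (c i)) := by
  obtain ⟨B, hB0, hPB⟩ : ∃ B : ℝ, 0 ≤ B ∧ ∀ i j, P i j ≤ B := by
    obtain ⟨B, hB⟩ := Finite.bddAbove_range fun ij : Fin m × Fin n => P ij.1 ij.2
    exact ⟨max B 0, le_max_right _ _, fun i j => (hB ⟨(i, j), rfl⟩).trans (le_max_left _ _)⟩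
  have hne : (Set.Icc 0 fun _ => B : Set (Fin n → ℝ)).Nonempty := ⟨0, le_rfl, fun _ => hB0⟩
  have husc : UpperSemicontinuousOn (fun p => ∑ i, grev (P i) p (c i)) (Set.Icc 0 fun _ => B) :=
    upperSemicontinuousOn_sum fun i _ p hp =>
      (upperSemicontinuousAt_grev hp.1).upperSemicontinuousWithinAt _
  obtain ⟨p0, hp0, hmax⟩ := husc.exists_isMaxOn hne isCompact_Icc
  have hopt : ∀ p : Fin n → ℝ, 0 ≤ p →
      ∑ i, grev (P i) p (c i) ≤ ∑ i, grev (P i) p0 (c i) := fun p hp =>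
    (Finset.sum_le_sum fun i _ => grev_le_grev_min hp (hPB i) hB0).trans <|
      isMaxOn_iff.mp hmax (fun j => min (p j) B)
        ⟨fun j => le_min (hp j) hB0, fun _ => min_le_right _ _⟩
  exact ⟨p0, hp0.1, hopt, fun p hp =>
    (Finset.sum_le_sum fun i _ => wrevF_le_grev hp).trans (hopt p hp)⟩

/-- The relaxed (`ε = 0`, non-strict indicators) pricing problem
has a finite optimal value `g(0)` attained by some nonnegative price vector
`p0`; moreover `g(0)` dominates the value of every feasible strict solution,
i.e. `g(0) ≥ m·τ* = sup_(p ≥ 0) ∑ i, f i p`. -/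
theorem stmt_18 (m n : ℕ) (P : Fin m → Fin n → ℝ) (c : Fin m → Fin n)
    (hP : ∀ i j, 0 < P i j) :
    ∃ p0 : Fin n → ℝ, (∀ j, 0 ≤ p0 j) ∧
      (∀ p : Fin n → ℝ, (∀ j, 0 ≤ p j) →
        ∑ i, grev (P i) p (c i) ≤ ∑ i, grev (P i) p0 (c i)) ∧
      (∀ p : Fin n → ℝ, (∀ j, 0 ≤ p j) →
        ∑ i, wrevF (P i) p (c i) ≤ ∑ i, grev (P i) p0 (c i)) :=
  stmt_18_general m n P c
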